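/- Let Q be a real polynomial with Q(0) = 0 and deg Q ≥ 1, let ε > 0, let N be a positive integer, and let φ : [1,+∞) → (0,+∞) be a decreasing function with lim_{t→∞} φ(t) = 0. Then there exist an integer M > N and a real polynomial P with P(0) = 0, deg P ≤ M, ‖P‖_{[-1,1]} ≤ ε, and |(Q+P)(t)| ≤ e^{-2M} for all t with |t| ≤ φ(M). -/

import Mathlib

/-!
Take `P = Q * (G(X²) - 1)`, so that `Q + P = Q * G(X²)`, where `G(y)` is the probability that a
binomial `(m, y)` variable is at least `n`, a polynomial of degree `m` with values in `[0, 1]` on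
`[0, 1]`. Then `G(y) ≤ 2^m yⁿ` vanishes to order `n` at `0`, while Chernoff's bound makes
`1 - G` uniformly small on `[δ², 1]` as soon as `m = (K + 1) n` for a constant `K` depending only
on `δ`. Away from `0` this makes `|P| ≤ |Q| (1 - G)` small, and near `0` the factor `Q(0) = 0`
does. Since the degree `M = deg Q + 2m` is linear in the order of vanishing `n`,
`|Q G(t²)| ≤ A 2^m t^{2n}` beats `e^{-2M}` once `|t|` is below a threshold independent of `n`,
which `φ(M)` eventually is.
-/

open Filter Polynomial Finset

namespace bernsteinPolynomial

variable {m ν : ℕ} {y : ℝ}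

lemma natDegree_le (m ν : ℕ) : (bernsteinPolynomial ℝ m ν).natDegree ≤ m := by
  rcases le_or_gt ν m with h | h
  · unfold bernsteinPolynomial
    compute_degree
    omega
  · simp [eq_zero_of_lt ℝ h]

lemma eval_eq (m ν : ℕ) (y : ℝ) :
    (bernsteinPolynomial ℝ m ν).eval y = m.choose ν * y ^ ν * (1 - y) ^ (m - ν) := by
  simp [bernsteinPolynomial]

lemma eval_nonneg (h0 : 0 ≤ y) (h1 : y ≤ 1) : 0 ≤ (bernsteinPolynomial ℝ m ν).eval y := by
  rw [eval_eq]
  have : 0 ≤ 1 - y := by linarith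
  positivity

lemma sum_eval (m : ℕ) (y : ℝ) :
    ∑ ν ∈ range (m + 1), (bernsteinPolynomial ℝ m ν).eval y = 1 := by
  rw [← eval_finsetSum, sum, eval_one]

end bernsteinPolynomial

/-- `(bernsteinTail m n).eval y` is the probability that a binomial `(m, y)` variable is `≥ n`. -/
noncomputable def bernsteinTail (m n : ℕ) : ℝ[X] :=
  ∑ ν ∈ Ico n (m + 1), bernsteinPolynomial ℝ m ν

namespace bernsteinTail

variable {m n : ℕ} {y : ℝ}

lemma natDegree_le : (bernsteinTail m n).natDegree ≤ m :=
  natDegree_sum_le_of_forall_le _ _ fun ν _ => bernsteinPolynomial.natDegree_le m ν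

lemma eval_eq (m n : ℕ) (y : ℝ) :
    (bernsteinTail m n).eval y = ∑ ν ∈ Ico n (m + 1), (bernsteinPolynomial ℝ m ν).eval y :=
  eval_finsetSum _ _ _

lemma one_sub_eval (hnm : n ≤ m) (y : ℝ) :
    1 - (bernsteinTail m n).eval y = ∑ ν ∈ range n, (bernsteinPolynomial ℝ m ν).eval y := by
  rw [← bernsteinPolynomial.sum_eval m y, ← sum_range_add_sum_Ico _ (by omega : n ≤ m + 1),
    eval_eq]
  ring

lemma eval_mem_Icc (h0 : 0 ≤ y) (h1 : y ≤ 1) : (bernsteinTail m n).eval y ∈ Set.Icc 0 1 := by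
  rw [eval_eq]
  refine ⟨sum_nonneg fun ν _ => bernsteinPolynomial.eval_nonneg h0 h1, ?_⟩
  rw [← bernsteinPolynomial.sum_eval m y]
  exact sum_le_sum_of_subset_of_nonneg (fun _ h => mem_range.mpr (mem_Ico.mp h).2)
    fun ν _ _ => bernsteinPolynomial.eval_nonneg h0 h1

lemma eval_le (h0 : 0 ≤ y) (h1 : y ≤ 1) : (bernsteinTail m n).eval y ≤ 2 ^ m * y ^ n := by
  have h1' : 0 ≤ 1 - y := by linarith
  calc (bernsteinTail m n).eval y
      ≤ ∑ ν ∈ Ico n (m + 1), (m.choose ν : ℝ) * y ^ n := by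
        rw [eval_eq]
        refine sum_le_sum fun ν hν => ?_
        rw [bernsteinPolynomial.eval_eq, mul_assoc]
        gcongr
        calc y ^ ν * (1 - y) ^ (m - ν) ≤ y ^ n * 1 :=
              mul_le_mul (pow_le_pow_of_le_one h0 h1 (mem_Ico.mp hν).1)
                (pow_le_one₀ h1' (by linarith)) (by positivity) (by positivity)
          _ = y ^ n := mul_one _
    _ ≤ ∑ ν ∈ range (m + 1), (m.choose ν : ℝ) * y ^ n :=
        sum_le_sum_of_subset_of_nonneg (fun _ h => mem_range.mpr (mem_Ico.mp h).2)
          fun ν _ _ => by positivity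
    _ = 2 ^ m * y ^ n := by
        rw [← sum_mul]
        exact_mod_cast congrArg (fun k : ℕ => (k : ℝ) * y ^ n) (Nat.sum_range_choose m)

/-- Chernoff's bound, with the generating function of the binomial law evaluated at `1/2`. -/
lemma one_sub_eval_le (hnm : n ≤ m) (h0 : 0 ≤ y) (h1 : y ≤ 1) :
    1 - (bernsteinTail m n).eval y ≤ 2 ^ n * (1 - y / 2) ^ m := by
  have h1' : 0 ≤ 1 - y := by linarith
  calc 1 - (bernsteinTail m n).eval y
      ≤ ∑ ν ∈ range n, 2 ^ n * ((y / 2) ^ ν * (1 - y) ^ (m - ν) * m.choose ν) := by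
        rw [one_sub_eval hnm]
        refine sum_le_sum fun ν hν => ?_
        have h2 : (2 : ℝ) ^ ν ≤ 2 ^ n := pow_le_pow_right₀ one_le_two (mem_range.mp hν).le
        rw [bernsteinPolynomial.eval_eq, div_pow]
        have : (y ^ ν * (1 - y) ^ (m - ν) * m.choose ν) * 2 ^ ν ≤
            (y ^ ν * (1 - y) ^ (m - ν) * m.choose ν) * 2 ^ n := by gcongr
        field_simp
        linarith
    _ ≤ ∑ ν ∈ range (m + 1), 2 ^ n * ((y / 2) ^ ν * (1 - y) ^ (m - ν) * m.choose ν) :=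
        sum_le_sum_of_subset_of_nonneg (range_subset_range.mpr (by omega)) fun ν _ _ => by
          positivity
    _ = 2 ^ n * (1 - y / 2) ^ m := by
        rw [← mul_sum, ← add_pow]
        ring_nf

lemma exists_one_sub_eval_le {δ : ℝ} (hδ0 : 0 < δ) (hδ1 : δ ≤ 1) :
    ∃ K : ℕ, ∀ n, 1 ≤ n → ∀ y ∈ Set.Icc (δ ^ 2) 1,
      1 - (bernsteinTail ((K + 1) * n) n).eval y ≤ δ := by
  set ρ := 1 - δ ^ 2 / 2 with hρ
  have hρ0 : 0 ≤ ρ := by nlinarith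
  have hρ1 : ρ < 1 := by nlinarith
  obtain ⟨K, hK⟩ := exists_pow_lt_of_lt_one (half_pos hδ0) hρ1
  refine ⟨K, fun n hn y hy => ?_⟩
  have hy0 : 0 ≤ y := le_trans (sq_nonneg δ) hy.1
  calc 1 - (bernsteinTail ((K + 1) * n) n).eval y
      ≤ 2 ^ n * (1 - y / 2) ^ ((K + 1) * n) :=
        one_sub_eval_le (Nat.le_mul_of_pos_left n K.succ_pos) hy0 hy.2
    _ ≤ 2 ^ n * ρ ^ ((K + 1) * n) := by gcongr <;> linarith [hy.1, hy.2]
    _ ≤ 2 ^ n * ρ ^ (K * n) :=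
        mul_le_mul_of_nonneg_left (pow_le_pow_of_le_one hρ0 hρ1.le (by nlinarith)) (by positivity)
    _ = (2 * ρ ^ K) ^ n := by rw [mul_pow, pow_mul]
    _ ≤ δ ^ n := by gcongr; linarith
    _ ≤ δ := pow_le_of_le_one hδ0.le hδ1 (by omega)

end bernsteinTail

lemma exists_pos_le_one_mul_le {A ε : ℝ} (hA : 0 ≤ A) (hε : 0 < ε) :
    ∃ δ, 0 < δ ∧ δ ≤ 1 ∧ A * δ ≤ ε := by
  refine ⟨min 1 (ε / (A + 1)), lt_min one_pos (by positivity), min_le_left _ _, ?_⟩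
  calc A * min 1 (ε / (A + 1)) ≤ (A + 1) * (ε / (A + 1)) := by
        gcongr <;> [linarith; exact min_le_right _ _]
    _ = ε := by field_simp

lemma exists_mul_pow_le_mul_pow {A c ρ : ℝ} (hA : 0 ≤ A) (hc : 0 < c) (hρ : 0 < ρ) :
    ∃ r, 0 < r ∧ r ≤ 1 ∧ ∀ n, 1 ≤ n → ∀ s ∈ Set.Icc 0 r, A * s ^ n ≤ c * ρ ^ n := by
  obtain ⟨κ, hκ0, hκ1, hAκ⟩ := exists_pos_le_one_mul_le hA hc
  refine ⟨min 1 ρ * κ, by positivity, mul_le_one₀ (min_le_left _ _) hκ0.le hκ1,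
    fun n hn s hs => ?_⟩
  calc A * s ^ n ≤ A * (ρ * κ) ^ n := by
        gcongr
        · exact hs.1
        · exact hs.2.trans (by gcongr; exact min_le_right _ _)
    _ = A * κ ^ n * ρ ^ n := by ring
    _ ≤ A * κ * ρ ^ n := by
        gcongr
        exact pow_le_of_le_one hκ0.le hκ1 (by omega)
    _ ≤ c * ρ ^ n := by gcongr

lemma exists_abs_eval_le_mul_abs {Q : ℝ[X]} (hQ0 : Q.eval 0 = 0) :
    ∃ A, 0 ≤ A ∧ ∀ t, |t| ≤ 1 → |Q.eval t| ≤ A * |t| := by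
  obtain ⟨R, rfl⟩ : X ∣ Q := X_dvd_iff.mpr (by rwa [coeff_zero_eq_eval_zero])
  obtain ⟨A, hA⟩ := (isCompact_Icc (a := (-1 : ℝ)) (b := 1)).exists_bound_of_continuousOn
    R.continuous.continuousOn
  refine ⟨max A 0, le_max_right _ _, fun t ht => ?_⟩
  rw [eval_mul, eval_X, abs_mul, mul_comm]
  gcongr
  exact (hA t (abs_le.mp ht)).trans (le_max_left _ _)

lemma abs_mul_sub_one_le {q g : ℝ → ℝ} {A δ ε x : ℝ} (hA : 0 ≤ A) (hδ : 0 ≤ δ) (hAδ : A * δ ≤ ε)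
    (hq : ∀ t, |t| ≤ 1 → |q t| ≤ A * |t|) (hg : ∀ y ∈ Set.Icc 0 1, g y ∈ Set.Icc 0 1)
    (hgδ : ∀ y ∈ Set.Icc (δ ^ 2) 1, 1 - g y ≤ δ) (hx : |x| ≤ 1) :
    |q x * (g (x ^ 2) - 1)| ≤ ε := by
  have hx2 : x ^ 2 ≤ 1 := by nlinarith [abs_nonneg x, sq_abs x]
  have hgx := hg _ ⟨sq_nonneg x, hx2⟩
  rw [abs_mul, abs_sub_comm, abs_of_nonneg (a := 1 - g (x ^ 2)) (by linarith [hgx.2])]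
  rcases le_or_gt |x| δ with hxδ | hδx
  · calc |q x| * (1 - g (x ^ 2)) ≤ (A * δ) * 1 :=
          mul_le_mul ((hq x hx).trans (by gcongr)) (by linarith [hgx.1]) (by linarith [hgx.2])
            (by positivity)
      _ ≤ ε := by linarith
  · have hδx2 : δ ^ 2 ≤ x ^ 2 := by nlinarith [sq_abs x]
    calc |q x| * (1 - g (x ^ 2)) ≤ A * δ :=
          mul_le_mul ((hq x hx).trans (by nlinarith)) (hgδ _ ⟨hδx2, hx2⟩) (by linarith [hgx.2]) hA
      _ ≤ ε := hAδ

lemma exists_abs_mul_eval_bernsteinTail_le {q : ℝ → ℝ} {A : ℝ} (hA : 0 ≤ A)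
    (hq : ∀ t, |t| ≤ 1 → |q t| ≤ A * |t|) (d K : ℕ) :
    ∃ r, 0 < r ∧ ∀ n, 1 ≤ n → ∀ t, |t| ≤ r →
      |q t * (bernsteinTail ((K + 1) * n) n).eval (t ^ 2)| ≤
        Real.exp (-2 * (d + 2 * ((K + 1) * n) : ℕ)) := by
  set ρ := Real.exp (-4 * (K + 1)) / 2 ^ (K + 1)
  obtain ⟨r, hr0, hr1, hr⟩ :=
    exists_mul_pow_le_mul_pow hA (Real.exp_pos (-2 * d)) (by positivity : 0 < ρ)
  refine ⟨r, hr0, fun n hn t ht => ?_⟩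
  have ht1 : |t| ≤ 1 := ht.trans hr1
  have ht2 : t ^ 2 ≤ |t| := by nlinarith [abs_nonneg t, sq_abs t]
  have hG := bernsteinTail.eval_mem_Icc (m := (K + 1) * n) (n := n) (sq_nonneg t)
    (ht2.trans ht1)
  calc |q t * (bernsteinTail ((K + 1) * n) n).eval (t ^ 2)|
      ≤ A * (2 ^ ((K + 1) * n) * (t ^ 2) ^ n) := by
        rw [abs_mul, abs_of_nonneg hG.1]
        exact mul_le_mul ((hq t ht1).trans (by nlinarith))
          (bernsteinTail.eval_le (sq_nonneg t) (ht2.trans ht1)) hG.1 hA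
    _ = A * (t ^ 2) ^ n * 2 ^ ((K + 1) * n) := by ring
    _ ≤ Real.exp (-2 * d) * ρ ^ n * 2 ^ ((K + 1) * n) :=
        mul_le_mul_of_nonneg_right (hr n hn _ ⟨sq_nonneg t, ht2.trans ht⟩) (by positivity)
    _ = Real.exp (-2 * (d + 2 * ((K + 1) * n) : ℕ)) := by
        rw [mul_assoc, pow_mul, ← mul_pow, div_mul_cancel₀ _ (by positivity), ← Real.exp_nat_mul,
          ← Real.exp_add]
        congr 1
        push_cast
        ring

lemma natDegree_mul_comp_X_sq_sub_one_le {R : Type*} [CommRing R] (Q G : R[X]) :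
    (Q * (G.comp (X ^ 2) - 1)).natDegree ≤ Q.natDegree + 2 * G.natDegree := by
  refine natDegree_mul_le.trans (Nat.add_le_add_left ?_ _)
  refine (natDegree_sub_le _ _).trans (max_le (natDegree_comp_le.trans ?_) (by simp))
  rw [mul_comm]
  exact Nat.mul_le_mul_right _ (natDegree_X_pow_le 2)

theorem deep_zero_corollary_general
    (Q : Polynomial ℝ) (hQ0 : Q.eval 0 = 0)
    (ε : ℝ) (hε : 0 < ε) (N : ℕ)
    (φ : ℝ → ℝ)
    (hφ0 : Tendsto φ atTop (nhds 0)) :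
    ∃ M : ℕ, N < M ∧
      ∃ P : Polynomial ℝ, P.eval 0 = 0 ∧ P.natDegree ≤ M ∧
        (∀ x ∈ Set.Icc (-1:ℝ) 1, |P.eval x| ≤ ε) ∧
        ∀ t : ℝ, |t| ≤ φ M → |(Q + P).eval t| ≤ Real.exp (-2 * M) := by
  obtain ⟨A, hA0, hQA⟩ := exists_abs_eval_le_mul_abs hQ0
  obtain ⟨δ, hδ0, hδ1, hAδ⟩ := exists_pos_le_one_mul_le hA0 hε
  obtain ⟨K, hK⟩ := bernsteinTail.exists_one_sub_eval_le hδ0 hδ1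
  obtain ⟨r, hr0, hr⟩ := exists_abs_mul_eval_bernsteinTail_le hA0 hQA Q.natDegree K
  set M : ℕ → ℕ := fun n => Q.natDegree + 2 * ((K + 1) * n)
  have hM : Tendsto M atTop atTop := tendsto_atTop_mono (fun n =>
    ((Nat.le_mul_of_pos_left n K.succ_pos).trans (Nat.le_mul_of_pos_left _ two_pos)).trans
      (Nat.le_add_left _ _)) tendsto_id
  obtain ⟨n, hNn, hn1, hφn⟩ := ((hM.eventually_gt_atTop N).and ((eventually_ge_atTop 1).and
    ((tendsto_natCast_atTop_atTop.comp hM).eventually (hφ0.eventually_lt_const hr0)))).exists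
  set G := bernsteinTail ((K + 1) * n) n
  refine ⟨M n, hNn, Q * (G.comp (X ^ 2) - 1), by simp [hQ0], ?_, fun x hx => ?_, fun t ht => ?_⟩
  · exact (natDegree_mul_comp_X_sq_sub_one_le Q G).trans
      (Nat.add_le_add_left (Nat.mul_le_mul_left 2 bernsteinTail.natDegree_le) _)
  · simpa using abs_mul_sub_one_le (q := Q.eval) (g := G.eval) hA0 hδ0.le hAδ hQA
      (fun y hy => bernsteinTail.eval_mem_Icc hy.1 hy.2) (hK n hn1) (abs_le.mpr hx)
  · have h := hr n hn1 t (ht.trans hφn.le)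
    rwa [eval_add, eval_mul, eval_sub, eval_comp, eval_pow, eval_X, eval_one,
      show ∀ a b : ℝ, a + a * (b - 1) = a * b from fun a b => by ring]

theorem deep_zero_corollary
    (Q : Polynomial ℝ) (hQ0 : Q.eval 0 = 0) (hQdeg : 1 ≤ Q.natDegree)
    (ε : ℝ) (hε : 0 < ε) (N : ℕ) (hN : 0 < N)
    (φ : ℝ → ℝ) (hφpos : ∀ x, 1 ≤ x → 0 < φ x)
    (hφanti : AntitoneOn φ (Set.Ici (1:ℝ)))
    (hφ0 : Tendsto φ atTop (nhds 0)) :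
    ∃ M : ℕ, N < M ∧
      ∃ P : Polynomial ℝ, P.eval 0 = 0 ∧ P.natDegree ≤ M ∧
        (∀ x ∈ Set.Icc (-1:ℝ) 1, |P.eval x| ≤ ε) ∧
        ∀ t : ℝ, |t| ≤ φ M → |(Q + P).eval t| ≤ Real.exp (-2 * M) :=
  deep_zero_corollary_general Q hQ0 ε hε N φ hφ0
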